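/- Under hypotheses (2.5) and (2.6), the set T := {y ∈ F_p^× : |S_2 ∩ y⁻¹S_2| > Δp/(8φ(0))} satisfies |T| ≥ (Δ⁵/2¹⁵)|S_1|. -/

import Mathlib

open Finset Complex
open scoped Classical BigOperators Pointwise

/-- The additive character `x ↦ e^{2πix/p}` on `ZMod p`. -/
noncomputable def ePsi (p : ℕ) (x : ZMod p) : ℂ :=
  Complex.exp (2 * Real.pi * Complex.I * (x.val : ℂ) / (p : ℂ))

/-- Fourier transform of a (real) measure on `ZMod p`. -/
noncomputable def ft (p : ℕ) [NeZero p] (μ : ZMod p → ℝ) (ξ : ZMod p) : ℂ :=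
  ∑ x : ZMod p, (μ x : ℂ) * ePsi p (x * ξ)

/-- Convolution of two functions on `ZMod p`. -/
noncomputable def cnv (p : ℕ) [NeZero p] (f g : ZMod p → ℝ) (x : ZMod p) : ℝ :=
  ∑ y : ZMod p, f y * g (x - y)

/-- `φ(x) = p · (μ ∗ μ⁻)(x)`. -/
noncomputable def phiF (p : ℕ) [NeZero p] (μ : ZMod p → ℝ) (x : ZMod p) : ℝ :=
  (p : ℝ) * cnv p μ (fun y => μ (-y)) x

/-- `k`-fold convolution of `f` (0-fold is the Dirac mass at 0). -/
noncomputable def convIter (p : ℕ) [NeZero p] (f : ZMod p → ℝ) : ℕ → ZMod p → ℝ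
  | 0 => fun x => if x = 0 then 1 else 0
  | n + 1 => cnv p f (convIter p f n)

/-- `ν_k`, the `k`-fold convolution of `ν = μ ∗ μ⁻`. -/
noncomputable def nuk (p : ℕ) [NeZero p] (μ : ZMod p → ℝ) (k : ℕ) : ZMod p → ℝ :=
  convIter p (cnv p μ (fun y => μ (-y))) k

/-- `Λ_δ`, the set of large Fourier coefficients. -/
noncomputable def Lam (p : ℕ) [NeZero p] (μ : ZMod p → ℝ) (δ : ℝ) : Finset (ZMod p) :=
  Finset.univ.filter (fun ξ => (p : ℝ) ^ (-δ) < ‖ft p μ ξ‖)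

/-! Write `φ = p (μ ∗ μ⁻)`. Fourier inversion turns (2.5) into the physical-space bound
`Σ_y μ(y) Σ_x φ(x) φ(yx) > Δ p φ(0)`. For `y ≠ 0`, the pairs with `x, yx ∈ S₂` contribute at
most `φ(0)² |S₂ ∩ y⁻¹S₂|`; every other pair has `x = 0` or a factor at most `(Δ/8) φ(0)`, so
with (2.6) `Σ_{y ≠ 0} μ(y) |S₂ ∩ y⁻¹S₂| > Δp / (4φ(0))`. The `y ∉ T` contribute at most
`Δp / (8φ(0))`, and by Cauchy–Schwarz the rest is at most
`|S₁| (|T| Σ μ²)^{1/2} = |S₁| (|T| φ(0) / p)^{1/2}`. Markov's inequality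
`|S₁| ≤ 8p / (Δ φ(0))` eliminates `φ(0)`. -/

section Fourier

variable {p : ℕ} [NeZero p]

lemma ePsi_eq_stdAddChar (x : ZMod p) : ePsi p x = ZMod.stdAddChar x := by
  rw [ZMod.stdAddChar_apply, ZMod.toCircle_apply, ePsi]

lemma ePsi_add (a b : ZMod p) : ePsi p (a + b) = ePsi p a * ePsi p b := by
  simp_rw [ePsi_eq_stdAddChar, AddChar.map_add_eq_mul]

lemma sum_ePsi_mul (x : ZMod p) :
    ∑ ξ : ZMod p, ePsi p (x * ξ) = if x = 0 then (p : ℂ) else 0 := by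
  simp_rw [ePsi_eq_stdAddChar, mul_comm x,
    AddChar.sum_mulShift x (ZMod.isPrimitive_stdAddChar p), ZMod.card, Nat.cast_ite,
    Nat.cast_zero]

lemma sum_sum_mul_ePsi (f : ZMod p → ℂ) :
    ∑ ξ : ZMod p, ∑ x : ZMod p, f x * ePsi p (x * ξ) = p * f 0 := by
  rw [sum_comm]
  simp_rw [← mul_sum, sum_ePsi_mul, mul_ite, mul_zero, sum_ite_eq', if_pos (mem_univ _),
    mul_comm]

lemma phiF_apply (μ : ZMod p → ℝ) (x : ZMod p) :
    phiF p μ x = p * ∑ y : ZMod p, μ y * μ (y - x) := by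
  simp [phiF, cnv, neg_sub]

lemma phiF_zero (μ : ZMod p → ℝ) : phiF p μ 0 = p * ∑ x : ZMod p, μ x ^ 2 := by
  simp [phiF_apply, sq]

lemma phiF_neg (μ : ZMod p → ℝ) (x : ZMod p) : phiF p μ (-x) = phiF p μ x := by
  rw [phiF_apply, phiF_apply, ← (Equiv.subRight x).sum_comp]
  simp [mul_comm]

lemma phiF_nonneg {μ : ZMod p → ℝ} (hμ : ∀ x, 0 ≤ μ x) (x : ZMod p) :
    0 ≤ phiF p μ x := by
  rw [phiF_apply]
  exact mul_nonneg (Nat.cast_nonneg p) (sum_nonneg fun y _ => mul_nonneg (hμ y) (hμ _))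

lemma phiF_le_phiF_zero (μ : ZMod p → ℝ) (x : ZMod p) : phiF p μ x ≤ phiF p μ 0 := by
  have hshift : ∑ y : ZMod p, μ (y - x) ^ 2 = ∑ y : ZMod p, μ y ^ 2 :=
    (Equiv.subRight x).sum_comp (μ · ^ 2)
  rw [phiF_apply, phiF_zero]
  refine mul_le_mul_of_nonneg_left ?_ (Nat.cast_nonneg p)
  calc ∑ y, μ y * μ (y - x) ≤ ∑ y, (μ y ^ 2 + μ (y - x) ^ 2) / 2 :=
        sum_le_sum fun y _ => by nlinarith [sq_nonneg (μ y - μ (y - x))]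
    _ = ∑ y, μ y ^ 2 := by rw [← sum_div, sum_add_distrib, hshift]; ring

lemma sum_phiF (μ : ZMod p → ℝ) :
    ∑ x : ZMod p, phiF p μ x = p * (∑ x : ZMod p, μ x) ^ 2 := by
  have hshift (y : ZMod p) : ∑ x : ZMod p, μ (y - x) = ∑ x : ZMod p, μ x :=
    (Equiv.subLeft y).sum_comp μ
  simp_rw [phiF_apply, ← mul_sum]
  rw [sum_comm]
  simp_rw [← mul_sum, hshift, ← sum_mul, sq]

lemma one_le_phiF_zero {μ : ZMod p → ℝ} (hμ1 : ∑ x : ZMod p, μ x = 1) :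
    1 ≤ phiF p μ 0 := by
  simpa [hμ1, phiF_zero] using sq_sum_le_card_mul_sum_sq (s := univ) (f := μ)

lemma natCast_mul_norm_ft_sq (μ : ZMod p → ℝ) (ξ : ZMod p) :
    (p : ℂ) * (‖ft p μ ξ‖ : ℂ) ^ 2
      = ∑ x : ZMod p, (phiF p μ x : ℂ) * ePsi p (x * ξ) := by
  have hconj :
      (starRingEnd ℂ) (ft p μ ξ) = ∑ y : ZMod p, (μ y : ℂ) * ePsi p (-(y * ξ)) := by
    simp [ft, ePsi_eq_stdAddChar, AddChar.map_neg_eq_conj]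
  calc (p : ℂ) * (‖ft p μ ξ‖ : ℂ) ^ 2
      = p * ∑ y : ZMod p, ∑ b : ZMod p, (μ y : ℂ) * μ b * ePsi p ((y - b) * ξ) := by
        rw [← Complex.mul_conj', hconj, ft, sum_mul_sum]
        refine congrArg _ (sum_congr rfl fun y _ => sum_congr rfl fun b _ => ?_)
        rw [show (y - b) * ξ = y * ξ + -(b * ξ) by ring, ePsi_add]
        ring
    _ = p * ∑ y : ZMod p, ∑ x : ZMod p, (μ y : ℂ) * μ (y - x) * ePsi p (x * ξ) := by
        congr 1
        refine sum_congr rfl fun y _ => ?_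
        exact Fintype.sum_equiv (Equiv.subLeft y) _ _ fun b => by simp
    _ = ∑ x : ZMod p, (phiF p μ x : ℂ) * ePsi p (x * ξ) := by
        simp only [phiF_apply, Complex.ofReal_mul, Complex.ofReal_natCast, Complex.ofReal_sum,
          mul_sum, sum_mul]
        rw [sum_comm]
        exact sum_congr rfl fun x _ => sum_congr rfl fun y _ => by ring

lemma sum_norm_ft_sq (μ : ZMod p → ℝ) :
    ∑ ξ : ZMod p, ‖ft p μ ξ‖ ^ 2 = phiF p μ 0 := by
  have hp : (p : ℂ) ≠ 0 := Nat.cast_ne_zero.2 (NeZero.ne p)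
  have h : (p : ℂ) * ∑ ξ : ZMod p, (‖ft p μ ξ‖ : ℂ) ^ 2 = p * phiF p μ 0 := by
    simp_rw [mul_sum, natCast_mul_norm_ft_sq, sum_sum_mul_ePsi]
  exact_mod_cast mul_left_cancel₀ hp h

lemma natCast_mul_sum_norm_ft_sq_mul (μ : ZMod p → ℝ) (y : ZMod p) :
    p * ∑ ξ : ZMod p, ‖ft p μ ξ‖ ^ 2 * ‖ft p μ (y * ξ)‖ ^ 2
      = ∑ x : ZMod p, phiF p μ x * phiF p μ (y * x) := by
  have hp : (p : ℂ) ≠ 0 := Nat.cast_ne_zero.2 (NeZero.ne p)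
  have h :
      (p : ℂ) * (p * ∑ ξ : ZMod p, (‖ft p μ ξ‖ : ℂ) ^ 2 * (‖ft p μ (y * ξ)‖ : ℂ) ^ 2)
        = p * ∑ x : ZMod p, (phiF p μ x : ℂ) * phiF p μ (y * x) :=
    calc _
        = ∑ ξ : ZMod p, (∑ a : ZMod p, (phiF p μ a : ℂ) * ePsi p (a * ξ))
            * ∑ b : ZMod p, (phiF p μ b : ℂ) * ePsi p (b * (y * ξ)) := by
          rw [mul_sum, mul_sum]
          refine sum_congr rfl fun ξ _ => ?_
          rw [← natCast_mul_norm_ft_sq, ← natCast_mul_norm_ft_sq]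
          ring
      _ = ∑ b : ZMod p, (phiF p μ b : ℂ) *
            ∑ ξ : ZMod p, ∑ a : ZMod p, (phiF p μ (a - b * y) : ℂ) * ePsi p (a * ξ) := by
          simp_rw [sum_mul_sum, mul_sum]
          conv_lhs => enter [2, ξ]; rw [sum_comm]
          rw [sum_comm]
          refine sum_congr rfl fun b _ => sum_congr rfl fun ξ _ => ?_
          refine Fintype.sum_equiv (Equiv.addRight (b * y)) _ _ fun a => ?_
          rw [Equiv.coe_addRight, add_sub_cancel_right, add_mul, ePsi_add, mul_assoc b y ξ]
          ring
      _ = p * ∑ x : ZMod p, (phiF p μ x : ℂ) * phiF p μ (y * x) := by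
          simp_rw [sum_sum_mul_ePsi, mul_sum, zero_sub, phiF_neg]
          exact sum_congr rfl fun b _ => by rw [mul_comm b y]; ring
  exact_mod_cast mul_left_cancel₀ hp h

lemma natCast_mul_sum_sum_norm_ft_sq_mul (μ : ZMod p → ℝ) :
    p * ∑ ξ : ZMod p, ∑ y : ZMod p, ‖ft p μ ξ‖ ^ 2 * ‖ft p μ (y * ξ)‖ ^ 2 * μ y
      = ∑ y : ZMod p, μ y * ∑ x : ZMod p, phiF p μ x * phiF p μ (y * x) := by
  simp_rw [← natCast_mul_sum_norm_ft_sq_mul, mul_sum]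
  rw [sum_comm]
  exact sum_congr rfl fun y _ => sum_congr rfl fun ξ _ => by ring

end Fourier

section Counting

variable {K : Type*} [Field K] [DecidableEq K] {φ : K → ℝ} {S : Finset K} {t : ℝ}

lemma mul_comp_mul_le (hφ : ∀ x, 0 ≤ φ x) (hφ0 : ∀ x, φ x ≤ φ 0) (ht : 0 ≤ t)
    (hS : ∀ x ∉ S, x ≠ 0 → φ x ≤ t) {y : K} (hy : y ≠ 0) (x : K) :
    φ x * φ (y * x) ≤ φ 0 ^ 2 * (if x ∈ S ∧ y * x ∈ S then 1 else 0)
      + φ 0 ^ 2 * (if x = 0 then 1 else 0) + t * (φ x + φ (y * x)) := by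
  have hmax : φ x * φ (y * x) ≤ φ 0 ^ 2 := by
    rw [sq]; exact mul_le_mul (hφ0 x) (hφ0 _) (hφ _) ((hφ x).trans (hφ0 x))
  have hrest : 0 ≤ t * (φ x + φ (y * x)) := mul_nonneg ht (add_nonneg (hφ x) (hφ _))
  by_cases hxy : x ∈ S ∧ y * x ∈ S
  · simp only [hxy, and_self, if_true]
    split_ifs <;> nlinarith [sq_nonneg (φ 0)]
  simp only [hxy, if_false, mul_zero, zero_add]
  by_cases hx : x = 0
  · subst hx
    simp only [if_true]
    linarith
  simp only [hx, if_false, mul_zero, zero_add]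
  rcases not_and_or.1 hxy with hxS | hyxS
  · nlinarith [hS x hxS hx, hφ x, hφ (y * x)]
  · nlinarith [hS _ hyxS (mul_ne_zero hy hx), hφ x, hφ (y * x)]

lemma sum_mul_comp_mul_le [Fintype K] (hφ : ∀ x, 0 ≤ φ x) (hφ0 : ∀ x, φ x ≤ φ 0)
    (ht : 0 ≤ t) (hS : ∀ x ∉ S, x ≠ 0 → φ x ≤ t) {y : K} (hy : y ≠ 0) :
    ∑ x, φ x * φ (y * x)
      ≤ φ 0 ^ 2 * #{x ∈ S | y * x ∈ S} + (φ 0 ^ 2 + 2 * t * ∑ x, φ x) := by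
  have hcomp : ∑ x, φ (y * x) = ∑ x, φ x :=
    Fintype.sum_equiv (Equiv.mulLeft₀ y hy) _ _ fun _ => rfl
  have hcount : #{x | x ∈ S ∧ y * x ∈ S} = #{x ∈ S | y * x ∈ S} := by
    congr 1; ext; simp
  refine (sum_le_sum fun x _ => mul_comp_mul_le hφ hφ0 ht hS hy x).trans_eq ?_
  simp only [sum_add_distrib, ← mul_sum, sum_boole, hcount, filter_eq', mem_univ, if_true,
    card_singleton, Nat.cast_one, hcomp]
  ring

lemma sum_mul_sum_mul_comp_mul_le [Fintype K] (hφ : ∀ x, 0 ≤ φ x) (hφ0 : ∀ x, φ x ≤ φ 0)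
    (ht : 0 ≤ t) (hS : ∀ x ∉ S, x ≠ 0 → φ x ≤ t) {w : K → ℝ} (hw : ∀ y, 0 ≤ w y)
    (hw1 : ∑ y, w y = 1) :
    ∑ y, w y * ∑ x, φ x * φ (y * x)
      ≤ φ 0 ^ 2 * ∑ y ∈ univ.erase 0, w y * #{x ∈ S | y * x ∈ S}
        + (φ 0 ^ 2 + 2 * t * ∑ x, φ x) + w 0 * φ 0 * ∑ x, φ x := by
  set B := φ 0 ^ 2 + 2 * t * ∑ x, φ x
  have hB : 0 ≤ B := by have := sum_nonneg fun x (_ : x ∈ univ) => hφ x; positivity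
  have hzero : ∑ x, φ x * φ (0 * x) = φ 0 * ∑ x, φ x := by
    rw [mul_comm, sum_mul]; simp only [zero_mul]
  have herase : ∑ y ∈ univ.erase 0, w y ≤ 1 :=
    hw1 ▸ sum_le_sum_of_subset_of_nonneg (erase_subset _ _) fun y _ _ => hw y
  have hnonzero : ∑ y ∈ univ.erase 0, w y * ∑ x, φ x * φ (y * x)
      ≤ φ 0 ^ 2 * ∑ y ∈ univ.erase 0, w y * #{x ∈ S | y * x ∈ S} + B := calc
    _ ≤ ∑ y ∈ univ.erase 0, w y * (φ 0 ^ 2 * #{x ∈ S | y * x ∈ S} + B) :=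
        sum_le_sum fun y hy => mul_le_mul_of_nonneg_left
          (sum_mul_comp_mul_le hφ hφ0 ht hS (ne_of_mem_erase hy)) (hw y)
    _ = φ 0 ^ 2 * ∑ y ∈ univ.erase 0, w y * #{x ∈ S | y * x ∈ S}
          + B * ∑ y ∈ univ.erase 0, w y := by
        simp only [mul_add, sum_add_distrib, mul_sum]
        congr 1 <;> exact sum_congr rfl fun y _ => by ring
    _ ≤ _ := by gcongr; exact mul_le_of_le_one_right hB herase
  rw [← add_sum_erase _ _ (mem_univ 0), hzero]
  linarith

end Counting

section Averaging

variable {ι : Type*} (s : Finset ι) {w N : ι → ℝ} {c : ℝ}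

lemma sum_mul_le_sum_filter_lt_add (hw : ∀ i ∈ s, 0 ≤ w i) (hw1 : ∑ i ∈ s, w i ≤ 1)
    (hc : 0 ≤ c) : ∑ i ∈ s, w i * N i ≤ ∑ i ∈ s with c < N i, w i * N i + c := by
  rw [← sum_filter_add_sum_filter_not s (c < N ·)]
  gcongr
  calc ∑ i ∈ s with ¬c < N i, w i * N i ≤ ∑ i ∈ s with ¬c < N i, w i * c :=
        sum_le_sum fun i hi => by
          rw [mem_filter, not_lt] at hi
          exact mul_le_mul_of_nonneg_left hi.2 (hw i hi.1)
    _ ≤ ∑ i ∈ s, w i * c := sum_le_sum_of_subset_of_nonneg (filter_subset _ _)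
        fun i hi _ => mul_nonneg (hw i hi) hc
    _ ≤ c := by rw [← sum_mul]; nlinarith

lemma sq_lt_mul_card_filter_mul_sum_sq (hw : ∀ i ∈ s, 0 ≤ w i) (hw1 : ∑ i ∈ s, w i ≤ 1)
    (hc : 0 ≤ c) {M : ℝ} (hN : ∀ i ∈ s, N i ≤ M) (h : 2 * c < ∑ i ∈ s, w i * N i) :
    c ^ 2 < M ^ 2 * #{i ∈ s | c < N i} * ∑ i ∈ s, w i ^ 2 := by
  set T := s.filter (c < N ·)
  have hT : T ⊆ s := filter_subset _ _
  have hcT : c < M * ∑ i ∈ T, w i := calc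
    c < ∑ i ∈ T, w i * N i := by linarith [sum_mul_le_sum_filter_lt_add s (N := N) hw hw1 hc]
    _ ≤ ∑ i ∈ T, w i * M :=
        sum_le_sum fun i hi => mul_le_mul_of_nonneg_left (hN i (hT hi)) (hw i (hT hi))
    _ = M * ∑ i ∈ T, w i := by rw [← sum_mul, mul_comm]
  calc c ^ 2 < (M * ∑ i ∈ T, w i) ^ 2 := pow_lt_pow_left₀ hcT hc two_ne_zero
    _ = M ^ 2 * (∑ i ∈ T, w i) ^ 2 := mul_pow _ _ _
    _ ≤ M ^ 2 * (#T * ∑ i ∈ T, w i ^ 2) := by gcongr; exact sq_sum_le_card_mul_sum_sq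
    _ ≤ M ^ 2 * #T * ∑ i ∈ s, w i ^ 2 := by
      rw [← mul_assoc]
      gcongr

lemma card_filter_lt_mul_le_sum [Fintype ι] {f : ι → ℝ} (hf : ∀ i, 0 ≤ f i) (t : ℝ) :
    #{i | t < f i} * t ≤ ∑ i, f i := calc
  #{i | t < f i} * t ≤ ∑ i with t < f i, f i := by
    rw [← nsmul_eq_mul]
    exact card_nsmul_le_sum _ _ _ fun i hi => (mem_filter.1 hi).2.le
  _ ≤ ∑ i, f i := sum_le_sum_of_subset_of_nonneg (subset_univ _) fun i _ _ => hf i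

end Averaging

lemma pow_five_div_mul_le_of_sq_lt {Δ P φ s t : ℝ} (hΔ : 0 < Δ) (hP : 0 < P) (hφ : 0 < φ)
    (hs : 0 ≤ s) (ht : 0 ≤ t) (hcs : (Δ * P / (8 * φ)) ^ 2 < s ^ 2 * t * (φ / P))
    (hsφ : s * (Δ / 8 * φ) ≤ P) : Δ ^ 5 / 2 ^ 15 * s ≤ t := by
  have h1 : Δ ^ 2 * P ^ 3 ≤ 64 * φ ^ 3 * s ^ 2 * t := by
    rw [div_pow, div_lt_iff₀ (by positivity)] at hcs
    field_simp at hcs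
    nlinarith
  have h2 : (Δ * φ * s) ^ 3 ≤ (8 * P) ^ 3 := pow_le_pow_left₀ (by positivity) (by linarith) 3
  have h3 : Δ ^ 5 * s * P ^ 3 ≤ 2 ^ 15 * t * P ^ 3 := calc
    Δ ^ 5 * s * P ^ 3 = (Δ ^ 2 * P ^ 3) * (Δ ^ 3 * s) := by ring
    _ ≤ (64 * φ ^ 3 * s ^ 2 * t) * (Δ ^ 3 * s) := by gcongr
    _ = 64 * t * (Δ * φ * s) ^ 3 := by ring
    _ ≤ 64 * t * (8 * P) ^ 3 := by gcongr
    _ = 2 ^ 15 * t * P ^ 3 := by ring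
  rw [div_mul_eq_mul_div, div_le_iff₀ (by positivity)]
  nlinarith [le_of_mul_le_mul_right h3 (by positivity)]

lemma div_lt_sum_mul_card_filter_mul_mem {p : ℕ} [Fact p.Prime] {μ : ZMod p → ℝ}
    (hμ : ∀ x, 0 ≤ μ x) (hμ1 : ∑ x : ZMod p, μ x = 1) {Δ : ℝ} (hΔ : 0 < Δ)
    (h25 : ∑ ξ : ZMod p, ∑ y : ZMod p, ‖ft p μ ξ‖ ^ 2 * ‖ft p μ (y * ξ)‖ ^ 2 * μ y
      > Δ * ∑ ξ : ZMod p, ‖ft p μ ξ‖ ^ 2)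
    (h26a : μ 0 < Δ / 4) (h26b : ∑ x : ZMod p, μ x ^ 2 < Δ / 4) {S : Finset (ZMod p)}
    (hS : ∀ x ∉ S, x ≠ 0 → phiF p μ x ≤ Δ / 8 * phiF p μ 0) :
    Δ * p / (4 * phiF p μ 0) < ∑ y ∈ univ.erase 0, μ y * #{x ∈ S | y * x ∈ S} := by
  set φ := phiF p μ
  have hp : (0 : ℝ) < p := Nat.cast_pos.2 (Fact.out : p.Prime).pos
  have hφ0 : 1 ≤ φ 0 := one_le_phiF_zero hμ1
  have hφ0_lt : φ 0 < p * (Δ / 4) := by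
    rw [show φ 0 = _ from phiF_zero μ]; exact mul_lt_mul_of_pos_left h26b hp
  have henergy : p * (Δ * φ 0) < ∑ y, μ y * ∑ x, φ x * φ (y * x) := by
    have := mul_lt_mul_of_pos_left h25 hp
    rwa [natCast_mul_sum_sum_norm_ft_sq_mul, sum_norm_ft_sq] at this
  have hupper := sum_mul_sum_mul_comp_mul_le (phiF_nonneg hμ) (phiF_le_phiF_zero μ)
    (by positivity) hS hμ hμ1
  rw [show ∑ x, φ x = p from (sum_phiF μ).trans (by rw [hμ1]; ring)] at hupper
  have hμ0 : μ 0 * φ 0 * p ≤ Δ / 4 * φ 0 * p := by gcongr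
  rw [div_lt_iff₀ (by positivity)]
  nlinarith

theorem stmt6_general (p : ℕ) [Fact p.Prime] (μ : ZMod p → ℝ)
    (hpos : ∀ x, 0 ≤ μ x) (hsum : ∑ x : ZMod p, μ x = 1)
    (Δ : ℝ) (hΔ0 : 0 < Δ)
    (h25 : ∑ ξ : ZMod p, ∑ y : ZMod p,
        ‖ft p μ ξ‖ ^ 2 * ‖ft p μ (y * ξ)‖ ^ 2 * μ y
      > Δ * ∑ ξ : ZMod p, ‖ft p μ ξ‖ ^ 2)
    (h26a : μ 0 < Δ / 4) (h26b : ∑ x : ZMod p, (μ x) ^ 2 < Δ / 4)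
    (S1 S2 T : Finset (ZMod p))
    (hS1 : S1 = Finset.univ.filter (fun x => Δ / 8 * phiF p μ 0 < phiF p μ x))
    (hS2 : S2 = S1.erase 0)
    (hT : T = Finset.univ.filter (fun y : ZMod p => y ≠ 0 ∧
        Δ * p / (8 * phiF p μ 0) < ((S2.filter (fun x => y * x ∈ S2)).card : ℝ))) :
    (T.card : ℝ) ≥ Δ ^ 5 / 2 ^ 15 * (S1.card : ℝ) := by
  set φ := phiF p μ
  set c := Δ * p / (8 * φ 0)
  have hp : (0 : ℝ) < p := Nat.cast_pos.2 (Fact.out : p.Prime).pos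
  have hφ0 : 1 ≤ φ 0 := one_le_phiF_zero hsum
  have hmass := div_lt_sum_mul_card_filter_mul_mem hpos hsum hΔ0 h25 h26a h26b (S := S2)
    fun x hx hx0 => by simpa [hS2, hS1, hx0] using hx
  have hcs := sq_lt_mul_card_filter_mul_sum_sq (univ.erase 0) (fun y _ => hpos y)
    (hsum ▸ sum_le_sum_of_subset_of_nonneg (erase_subset 0 univ) fun y _ _ => hpos y)
    (by positivity) (M := #S1)
    (fun y _ => Nat.cast_le.2 ((card_filter_le _ _).trans (hS2 ▸ card_erase_le)))
    (c := c) (by linarith [show Δ * p / (4 * φ 0) = 2 * c by ring])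
  have hTeq : T = {y ∈ (univ : Finset (ZMod p)).erase 0 | c < #{x ∈ S2 | y * x ∈ S2}} := by
    ext; simp [hT, c]
  have hφsum : ∑ x, φ x = p := (sum_phiF μ).trans (by rw [hsum]; ring)
  have hS1card : #S1 * (Δ / 8 * φ 0) ≤ p :=
    hS1 ▸ hφsum ▸ card_filter_lt_mul_le_sum (phiF_nonneg hpos) _
  rw [← hTeq] at hcs
  refine pow_five_div_mul_le_of_sq_lt hΔ0 hp (by linarith) (Nat.cast_nonneg _) (Nat.cast_nonneg _)
    (hcs.trans_le ?_) hS1card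
  rw [show φ 0 = _ from phiF_zero μ, mul_div_cancel_left₀ _ hp.ne']
  gcongr
  exact erase_subset _ _

theorem stmt6 (p : ℕ) [Fact p.Prime] (μ : ZMod p → ℝ)
    (hpos : ∀ x, 0 ≤ μ x) (hsum : ∑ x : ZMod p, μ x = 1)
    (Δ : ℝ) (hΔ0 : 0 < Δ) (hΔ1 : Δ ≤ 1 / 2)
    (h25 : ∑ ξ : ZMod p, ∑ y : ZMod p,
        ‖ft p μ ξ‖ ^ 2 * ‖ft p μ (y * ξ)‖ ^ 2 * μ y
      > Δ * ∑ ξ : ZMod p, ‖ft p μ ξ‖ ^ 2)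
    (h26a : μ 0 < Δ / 4) (h26b : ∑ x : ZMod p, (μ x) ^ 2 < Δ / 4)
    (S1 S2 T : Finset (ZMod p))
    (hS1 : S1 = Finset.univ.filter (fun x => Δ / 8 * phiF p μ 0 < phiF p μ x))
    (hS2 : S2 = S1.erase 0)
    (hT : T = Finset.univ.filter (fun y : ZMod p => y ≠ 0 ∧
        Δ * p / (8 * phiF p μ 0) < ((S2.filter (fun x => y * x ∈ S2)).card : ℝ))) :
    (T.card : ℝ) ≥ Δ ^ 5 / 2 ^ 15 * (S1.card : ℝ) :=
  stmt6_general p μ hpos hsum Δ hΔ0 h25 h26a h26b S1 S2 T hS1 hS2 hT
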